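/- Let φ : (M, J, θ) → (N, h, J') be a smooth map from a Sasakian manifold to a Kähler manifold and φ̃ : C(M) → N its conic extension φ̃(x,r) = φ(x) on the Kähler cone (C(M), g̃, J̃). Then φ is CR holomorphic (dφ∘J = J'∘dφ on M) if and only if φ̃ is holomorphic (dφ̃∘J̃ = J'∘dφ̃); similarly for anti-holomorphic. -/

import Mathlib

/-!
Since `dφ̃` kills the radial direction, `dφ̃ ∘ J̃` differs from `dφ ∘ J` only by a multiple of
`dφ(T)`. Conversely, CR holomorphicity forces `dφ(T) = 0`: from `JT = 0` we get `ε J'(dφ T) = 0`,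
and `J'` is injective because `J'² = -1`.
-/

theorem LinearMap.injective_of_comp_self_eq_neg {R M : Type*} [Semiring R] [AddCommGroup M]
    [Module R M] (J : M →ₗ[R] M) (hJ2 : ∀ s, J (J s) = -s) : Function.Injective J :=
  fun x y hxy => neg_injective <| by rw [← hJ2 x, ← hJ2 y, hxy]

theorem LinearMap.apply_eq_zero_of_intertwines_of_apply_eq_zero {R V W : Type*} [Semiring R]
    [AddCommGroup V] [Module R V] [AddCommGroup W] [Module R W]
    (J : V →ₗ[R] V) (J' : W →ₗ[R] W) {f : V →ₗ[R] W} {ε : R} (hε : IsUnit ε)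
    (hJ'2 : ∀ s, J' (J' s) = -s) (hf : ∀ X, f (J X) = ε • J' (f X)) {v : V} (hv : J v = 0) :
    f v = 0 := by
  have hJ'fv : ε • J' (f v) = 0 := by rw [← hf v, hv, map_zero]
  exact J'.injective_of_comp_self_eq_neg hJ'2 <| by rw [map_zero, ← hε.smul_eq_zero, hJ'fv]

theorem conic_extension_holomorphic_iff_crHolomorphic_general
    {V Wn : Type*} [AddCommGroup V] [Module ℝ V]
    [AddCommGroup Wn] [Module ℝ Wn]
    (J : V →ₗ[ℝ] V) (θ : V →ₗ[ℝ] ℝ) (T : V)    -- CR structure, contact form, Reeb field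
    (J' : Wn →ₗ[ℝ] Wn)                          -- complex structure of the Kähler target
    (dphi : V →ₗ[ℝ] Wn)                         -- differential of φ
    (r0 : ℝ)
    (hJT : J T = 0)
    (hJ'2 : ∀ s, J' (J' s) = -s)
    -- the almost complex structure J̃ of the cone at the point
    (Jt : ℝ × V → ℝ × V)
    (hJt : ∀ p : ℝ × V, Jt p = (-(r0 / 2) * θ p.2, J p.2 + ((2 / r0) * p.1) • T))
    -- the differential of the conic extension φ̃
    (dphit : ℝ × V → Wn) (hdphit : ∀ p, dphit p = dphi p.2)
    -- ε = 1: holomorphic; ε = −1: anti-holomorphic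
    (ε : ℝ) (hε : ε = 1 ∨ ε = -1) :
    (∀ X : V, dphi (J X) = ε • J' (dphi X))
      ↔ (∀ p : ℝ × V, dphit (Jt p) = ε • J' (dphit p)) := by
  have hdphit_Jt (p : ℝ × V) : dphit (Jt p) = dphi (J p.2) + ((2 / r0) * p.1) • dphi T := by
    rw [hdphit, hJt, map_add, map_smul]
  constructor
  · intro hcr p
    have hεunit : IsUnit ε := by rcases hε with rfl | rfl <;> simp
    have hT : dphi T = 0 :=
      LinearMap.apply_eq_zero_of_intertwines_of_apply_eq_zero J J' hεunit hJ'2 hcr hJT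
    rw [hdphit_Jt, hT, smul_zero, add_zero, hdphit]
    exact hcr p.2
  · intro hhol X
    simpa [hdphit_Jt, hdphit] using hhol (0, X)

/-- Let `φ : (M,J,θ) → (N,h,J')` be a smooth map from a Sasakian manifold to a
Kähler manifold and `φ̃ : C(M) → N`, `φ̃(x,r) = φ(x)`, its conic extension to the
Kähler cone `(C(M), g̃, J̃)`.  Then `φ` is CR holomorphic (`dφ∘J = J'∘dφ`) iff
`φ̃` is holomorphic (`dφ̃∘J̃ = J'∘dφ̃`); similarly for anti-holomorphic (`ε = −1`).
Working at a point with `r = r0 > 0`, cone tangent vectors are pairs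
`(a,Y) ∈ ℝ × V` with `∂r = (1,0)`, `ζ = (r0/2)∂r`, and the cone complex
structure is `J̃(a,Y) = (−(r0/2)θ(Y), JY + (2a/r0)T)`. -/
theorem conic_extension_holomorphic_iff_crHolomorphic
    {V Wn : Type*} [AddCommGroup V] [Module ℝ V]
    [AddCommGroup Wn] [Module ℝ Wn]
    (J : V →ₗ[ℝ] V) (θ : V →ₗ[ℝ] ℝ) (T : V)    -- CR structure, contact form, Reeb field
    (J' : Wn →ₗ[ℝ] Wn)                          -- complex structure of the Kähler target
    (dphi : V →ₗ[ℝ] Wn)                         -- differential of φ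
    (r0 : ℝ) (hr0 : 0 < r0)
    (hJT : J T = 0)
    (hJ'2 : ∀ s, J' (J' s) = -s)
    -- the almost complex structure J̃ of the cone at the point
    (Jt : ℝ × V → ℝ × V)
    (hJt : ∀ p : ℝ × V, Jt p = (-(r0 / 2) * θ p.2, J p.2 + ((2 / r0) * p.1) • T))
    -- the differential of the conic extension φ̃
    (dphit : ℝ × V → Wn) (hdphit : ∀ p, dphit p = dphi p.2)
    -- ε = 1: holomorphic; ε = −1: anti-holomorphic
    (ε : ℝ) (hε : ε = 1 ∨ ε = -1) :
    (∀ X : V, dphi (J X) = ε • J' (dphi X))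
      ↔ (∀ p : ℝ × V, dphit (Jt p) = ε • J' (dphit p)) :=
  conic_extension_holomorphic_iff_crHolomorphic_general J θ T J' dphi r0 hJT hJ'2 Jt hJt dphit
    hdphit ε hε
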